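/- arXiv:2309.11583 — 2 statements merged into one kernel-verified Lean document; each statement's English description precedes it below -/
import Mathlib

section
/- (Noncommutative Yang–Mills equation ⟺ noncommutative Gauss law and Ampère equation.) Let B be a unital associative ℂ-*-algebra with four pairwise commuting ℂ-linear derivations ∂₀,…,∂₃ satisfying ∂_μ(b*) = (∂_μ b)* for all b. Let Ω := B ⊗_ℂ Λ with Λ the exterior ℂ-algebra on dx⁰,…,dx³, product (a⊗ω)(b⊗η) := ab⊗ω∧η, differential d(b⊗ω) := Σ_μ ∂_μ(b)⊗dx^μ∧ω, and let ★ be the antilinear map with ★(b⊗ω) := b*⊗★ω, where on basis forms: ★dx⁰ = dx¹∧dx²∧dx³, ★dx¹ = dx⁰∧dx²∧dx³, ★dx² = −dx⁰∧dx¹∧dx³, ★dx³ = dx⁰∧dx¹∧dx², ★(dx⁰∧dx¹) = −dx²∧dx³, ★(dx⁰∧dx²) = dx¹∧dx³, ★(dx⁰∧dx³) = −dx¹∧dx², ★(dx¹∧dx²) = dx⁰∧dx³, ★(dx¹∧dx³) = −dx⁰∧dx², ★(dx²∧dx³) = dx⁰∧dx¹, ★(dx¹∧dx²∧dx³) = dx⁰,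 ★(dx⁰∧dx²∧dx³) = dx¹, ★(dx⁰∧dx¹∧dx³) = −dx², ★(dx⁰∧dx¹∧dx²) = dx³. Given φ, A = (A₁,A₂,A₃) in B, set A♭ := φ⊗dx⁰ − Σ_k A_k⊗dx^k and F♭ := dA♭ − i·A♭·A♭. Then d(★F♭) = i(A♭·(★F♭) − (★F♭)·A♭) holds if and only if both ∇·D = i[D,A*] and ∇×H − ∂₀D = i[D,φ*] − i(H×A* + A*×H) hold, where A* := (A₁*,A₂*,A₃*) and [D,A*] := Σ_k (D_k A_k* − A_k* D_k), [D,φ*] := (D_kφ* − φ*D_k)_k. -/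
noncomputable section

namespace NC

variable {B : Type*} [Ring B] [Algebra ℂ B]

/-- A ℂ-linear derivation of the (possibly noncommutative) ℂ-algebra `B`,
given as a plain function together with its defining properties. -/
structure IsDer (δ : B → B) : Prop where
  map_add : ∀ a b : B, δ (a + b) = δ a + δ b
  map_smul : ∀ (c : ℂ) (a : B), δ (c • a) = c • δ a
  leibniz : ∀ a b : B, δ (a * b) = δ a * b + a * δ b

/-- divergence `∇·X` of a triple. -/
def divg (d1 d2 d3 : B → B) (X : B × B × B) : B := d1 X.1 + d2 X.2.1 + d3 X.2.2

/-- curl `∇×X` of a triple. -/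
def curl (d1 d2 d3 : B → B) (X : B × B × B) : B × B × B :=
  (d2 X.2.2 - d3 X.2.1, d3 X.1 - d1 X.2.2, d1 X.2.1 - d2 X.1)

/-- gradient `∇a`. -/
def grad (d1 d2 d3 : B → B) (a : B) : B × B × B := (d1 a, d2 a, d3 a)

/-- apply a derivation componentwise to a triple, e.g. `∂₀X`. -/
def dmap (d0 : B → B) (X : B × B × B) : B × B × B := (d0 X.1, d0 X.2.1, d0 X.2.2)

/-- ordered cross product `X×Y` (multiplication from top to bottom). -/
def cross (X Y : B × B × B) : B × B × B :=
  (X.2.1 * Y.2.2 - X.2.2 * Y.2.1, X.2.2 * Y.1 - X.1 * Y.2.2, X.1 * Y.2.1 - X.2.1 * Y.1)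

/-- componentwise commutator `[a,X] = (aX_k - X_k a)_k`. -/
def commS (a : B) (X : B × B × B) : B × B × B :=
  (a * X.1 - X.1 * a, a * X.2.1 - X.2.1 * a, a * X.2.2 - X.2.2 * a)

/-- componentwise commutator `[X,a] = (X_k a - a X_k)_k`. -/
def commR (X : B × B × B) (a : B) : B × B × B :=
  (X.1 * a - a * X.1, X.2.1 * a - a * X.2.1, X.2.2 * a - a * X.2.2)

/-- scalar commutator `[X,Y] = Σ_k (X_k Y_k - Y_k X_k)`. -/
def commV (X Y : B × B × B) : B :=
  (X.1 * Y.1 - Y.1 * X.1) + (X.2.1 * Y.2.1 - Y.2.1 * X.2.1) +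
    (X.2.2 * Y.2.2 - Y.2.2 * X.2.2)

/-- classical part of the electric field: `E = -∂₀A - ∇φ`. -/
def Efield (d0 d1 d2 d3 : B → B) (φ : B) (A : B × B × B) : B × B × B :=
  -dmap d0 A - grad d1 d2 d3 φ

/-- classical part of the magnetic field: `Bf = ∇×A`. -/
def Bfield (d1 d2 d3 : B → B) (A : B × B × B) : B × B × B := curl d1 d2 d3 A

/-- the noncommutative electric field `D = E + i[φ,A]`. -/
def Dfield (d0 d1 d2 d3 : B → B) (φ : B) (A : B × B × B) : B × B × B :=
  Efield d0 d1 d2 d3 φ A + Complex.I • commS φ A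

/-- the noncommutative magnetic field `H = Bf + i(A×A)`. -/
def Hfield (d1 d2 d3 : B → B) (A : B × B × B) : B × B × B :=
  Bfield d1 d2 d3 A + Complex.I • cross A A

end NC


namespace NC

/-- componentwise star of a triple. -/
def starV {B : Type*} [Ring B] [StarRing B] (X : B × B × B) : B × B × B :=
  (star X.1, star X.2.1, star X.2.2)

open scoped TensorProduct

/-- the exterior ℂ-algebra on four generators `dx⁰,…,dx³`. -/
abbrev Lam4 : Type := ExteriorAlgebra ℂ (Fin 4 → ℂ)

/-- the generator `dx^μ` of the exterior algebra. -/
noncomputable def dx (μ : Fin 4) : Lam4 := ExteriorAlgebra.ι ℂ (Pi.single μ 1)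

/-- `Ω := B ⊗_ℂ Λ`, the quantum differential forms, with multiplication
`(a⊗ω)(b⊗η) = ab ⊗ ω∧η`. -/
abbrev OmegaB (B : Type*) [Ring B] [Algebra ℂ B] : Type _ := B ⊗[ℂ] Lam4

/-- the differential `d(b⊗ω) = Σ_μ ∂_μ(b) ⊗ dx^μ∧ω`. -/
noncomputable def dOp {B : Type*} [Ring B] [Algebra ℂ B]
    (der : Fin 4 → (B →ₗ[ℂ] B)) : OmegaB B →ₗ[ℂ] OmegaB B :=
  ∑ μ : Fin 4, TensorProduct.map (der μ) (LinearMap.mulLeft ℂ (dx μ))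

/-- the potential 1-form `A♭ = φ⊗dx⁰ - A₁⊗dx¹ - A₂⊗dx² - A₃⊗dx³`. -/
noncomputable def Aflat {B : Type*} [Ring B] [Algebra ℂ B]
    (φ : B) (A : B × B × B) : OmegaB B :=
  φ ⊗ₜ[ℂ] dx 0 - A.1 ⊗ₜ[ℂ] dx 1 - A.2.1 ⊗ₜ[ℂ] dx 2 - A.2.2 ⊗ₜ[ℂ] dx 3

/-- the field strength `F♭ = dA♭ - i·A♭·A♭`. -/
noncomputable def Fflat {B : Type*} [Ring B] [Algebra ℂ B]
    (der : Fin 4 → (B →ₗ[ℂ] B)) (φ : B) (A : B × B × B) : OmegaB B :=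
  dOp der (Aflat φ A) - Complex.I • (Aflat φ A * Aflat φ A)


/-!
Split the field strength as `F♭ = Σₖ Dₖ dx⁰∧dxᵏ − H₃ dx¹∧dx² + H₂ dx¹∧dx³ − H₁ dx²∧dx³`. The Hodge
operator acts on such 2-forms by the conjugated duality `(D, H) ↦ (−H*, D*)`, and both `d(★F♭)` and
the commutator `[A♭, ★F♭]` are 3-forms whose four coefficients can be read off independently. The
`dx¹∧dx²∧dx³` coefficient of the Yang–Mills equation is the conjugate of the Gauss law, the other
three are the conjugated components of the Ampère equation; the derivations commute with `*`,
so conjugating back gives the two equations.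
-/

lemma dx_mul_self (μ : Fin 4) : dx μ * dx μ = 0 := ExteriorAlgebra.ι_sq_zero _

lemma dx_mul_dx_mul_self (μ : Fin 4) (ω : Lam4) : dx μ * (dx μ * ω) = 0 := by
  rw [← mul_assoc, dx_mul_self, zero_mul]

lemma dx_mul_dx_anticomm (μ ν : Fin 4) : dx μ * dx ν = -(dx ν * dx μ) :=
  eq_neg_of_add_eq_zero_left (ExteriorAlgebra.ι_add_mul_swap _ _)

lemma dx_mul_dx_mul_anticomm (μ ν : Fin 4) (ω : Lam4) :
    dx μ * (dx ν * ω) = -(dx ν * (dx μ * ω)) := by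
  rw [← mul_assoc, dx_mul_dx_anticomm, neg_mul, mul_assoc]

/-- The coefficient of `dx^{t 0} ∧ dx^{t 1} ∧ dx^{t 2}`: the degree-3 part is paired with the
coordinates `t` by a determinant. -/
def coeff3Alternating (t : Fin 3 → Fin 4) : ∀ n : ℕ, (Fin 4 → ℂ) [⋀^Fin n]→ₗ[ℂ] ℂ
  | 3 => Matrix.detRowAlternating.compLinearMap (LinearMap.funLeft ℂ ℂ t)
  | _ => 0

lemma liftAlternating_coeff3Alternating_dx_mul_dx_mul_dx (t : Fin 3 → Fin 4) (a b c : Fin 4) :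
    ExteriorAlgebra.liftAlternating (coeff3Alternating t) (dx a * dx b * dx c) =
      (Matrix.of fun i j => Pi.single (M := fun _ : Fin 4 => ℂ) (![a, b, c] i) 1 (t j)).det := by
  have hιMulti : dx a * dx b * dx c =
      ExteriorAlgebra.ιMulti ℂ 3 ![Pi.single a 1, Pi.single b 1, Pi.single c 1] := by
    simp [ExteriorAlgebra.ιMulti_apply, dx, mul_assoc]
  rw [hιMulti, ExteriorAlgebra.liftAlternating_apply_ιMulti]
  rfl

section Forms

variable {B : Type*} [Ring B] [Algebra ℂ B]

def coeff3 (t : Fin 3 → Fin 4) : OmegaB B →ₗ[ℂ] B :=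
  (TensorProduct.rid ℂ B).toLinearMap ∘ₗ
    TensorProduct.map LinearMap.id (ExteriorAlgebra.liftAlternating (coeff3Alternating t))

lemma coeff3_tmul (t : Fin 3 → Fin 4) (b : B) (a₁ a₂ a₃ : Fin 4) :
    coeff3 t (b ⊗ₜ[ℂ] (dx a₁ * dx a₂ * dx a₃)) =
      (Matrix.of fun i j =>
        Pi.single (M := fun _ : Fin 4 => ℂ) (![a₁, a₂, a₃] i) 1 (t j)).det • b := by
  simp [coeff3, liftAlternating_coeff3Alternating_dx_mul_dx_mul_dx]

/-- The signs are those of `★(g dx⁰ + c₁ dx¹ + c₂ dx² + c₃ dx³)` up to conjugation. -/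
def threeForm (g : B) (c : B × B × B) : OmegaB B :=
  g ⊗ₜ[ℂ] (dx 1 * dx 2 * dx 3) + c.1 ⊗ₜ[ℂ] (dx 0 * dx 2 * dx 3) -
    c.2.1 ⊗ₜ[ℂ] (dx 0 * dx 1 * dx 3) + c.2.2 ⊗ₜ[ℂ] (dx 0 * dx 1 * dx 2)

lemma threeForm_inj {g g' : B} {c c' : B × B × B} :
    threeForm g c = threeForm g' c' ↔ g = g' ∧ c = c' := by
  refine ⟨fun h => ?_, fun ⟨hg, hc⟩ => hg ▸ hc ▸ rfl⟩
  have hcoeff (t : Fin 3 → Fin 4) := congrArg (coeff3 t) h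
  simp only [threeForm, map_add, map_sub, coeff3_tmul, Matrix.det_fin_three] at hcoeff
  refine ⟨?_, Prod.ext ?_ (Prod.ext ?_ ?_)⟩
  · simpa [Pi.single_apply] using hcoeff ![1, 2, 3]
  · simpa [Pi.single_apply] using hcoeff ![0, 2, 3]
  · simpa [Pi.single_apply] using hcoeff ![0, 1, 3]
  · simpa [Pi.single_apply] using hcoeff ![0, 1, 2]

lemma smul_threeForm (z : ℂ) (g : B) (c : B × B × B) :
    z • threeForm g c = threeForm (z • g) (z • c) := by
  simp only [threeForm, smul_add, smul_sub, TensorProduct.smul_tmul', Prod.smul_fst,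
    Prod.smul_snd]

def fieldForm (D H : B × B × B) : OmegaB B :=
  D.1 ⊗ₜ[ℂ] (dx 0 * dx 1) + D.2.1 ⊗ₜ[ℂ] (dx 0 * dx 2) + D.2.2 ⊗ₜ[ℂ] (dx 0 * dx 3) -
    H.2.2 ⊗ₜ[ℂ] (dx 1 * dx 2) + H.2.1 ⊗ₜ[ℂ] (dx 1 * dx 3) - H.1 ⊗ₜ[ℂ] (dx 2 * dx 3)

lemma dOp_tmul (der : Fin 4 → (B →ₗ[ℂ] B)) (b : B) (ω : Lam4) :
    dOp der (b ⊗ₜ[ℂ] ω) = ∑ μ, der μ b ⊗ₜ[ℂ] (dx μ * ω) := by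
  simp [dOp]

lemma Fflat_eq_fieldForm (der : Fin 4 → (B →ₗ[ℂ] B)) (φ : B) (A : B × B × B) :
    Fflat der φ A = fieldForm (Dfield (der 0) (der 1) (der 2) (der 3) φ A)
      (Hfield (der 1) (der 2) (der 3) A) := by
  simp only [Fflat, Aflat, fieldForm, Dfield, Hfield, Efield, Bfield, dmap, grad, curl, commS,
    cross, map_sub, dOp_tmul, Fin.sum_univ_four, Algebra.TensorProduct.tmul_mul_tmul, mul_sub,
    sub_mul, dx_mul_self, dx_mul_dx_anticomm 1 0, dx_mul_dx_anticomm 2 0, dx_mul_dx_anticomm 3 0,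
    dx_mul_dx_anticomm 2 1, dx_mul_dx_anticomm 3 1, dx_mul_dx_anticomm 3 2,
    Prod.fst_add, Prod.snd_add, Prod.fst_sub, Prod.snd_sub, Prod.fst_neg, Prod.snd_neg,
    Prod.smul_fst, Prod.smul_snd, TensorProduct.tmul_neg, TensorProduct.tmul_zero,
    TensorProduct.add_tmul, TensorProduct.sub_tmul, TensorProduct.neg_tmul,
    ← TensorProduct.smul_tmul']
  module

lemma dOp_fieldForm (der : Fin 4 → (B →ₗ[ℂ] B)) (D H : B × B × B) :
    dOp der (fieldForm D H) = threeForm (-divg (der 1) (der 2) (der 3) H)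
      (-(curl (der 1) (der 2) (der 3) D + dmap (der 0) H)) := by
  simp only [fieldForm, threeForm, divg, curl, dmap, map_add, map_sub, dOp_tmul,
    Fin.sum_univ_four, mul_assoc, dx_mul_dx_mul_self, dx_mul_self,
    dx_mul_dx_anticomm 2 1, dx_mul_dx_anticomm 3 1, dx_mul_dx_anticomm 3 2,
    dx_mul_dx_mul_anticomm 1 0, dx_mul_dx_mul_anticomm 2 0, dx_mul_dx_mul_anticomm 3 0,
    dx_mul_dx_mul_anticomm 2 1, dx_mul_dx_mul_anticomm 3 1, dx_mul_dx_mul_anticomm 3 2,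
    mul_neg, neg_neg, mul_zero, Prod.fst_add, Prod.snd_add, Prod.fst_neg, Prod.snd_neg,
    TensorProduct.tmul_neg, TensorProduct.tmul_zero, TensorProduct.add_tmul,
    TensorProduct.sub_tmul, TensorProduct.neg_tmul]
  module

lemma Aflat_mul_fieldForm_sub (φ : B) (A D H : B × B × B) :
    Aflat φ A * fieldForm D H - fieldForm D H * Aflat φ A =
      threeForm (commV A H) (cross A D + cross D A - commS φ H) := by
  simp only [Aflat, fieldForm, threeForm, commV, cross, commS, mul_add, add_mul, mul_sub, sub_mul,
    Algebra.TensorProduct.tmul_mul_tmul, mul_assoc, dx_mul_dx_mul_self, dx_mul_self,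
    dx_mul_dx_anticomm 1 0, dx_mul_dx_anticomm 2 0, dx_mul_dx_anticomm 3 0,
    dx_mul_dx_anticomm 2 1, dx_mul_dx_anticomm 3 1, dx_mul_dx_anticomm 3 2,
    dx_mul_dx_mul_anticomm 1 0, dx_mul_dx_mul_anticomm 2 0, dx_mul_dx_mul_anticomm 3 0,
    dx_mul_dx_mul_anticomm 2 1, dx_mul_dx_mul_anticomm 3 1, dx_mul_dx_mul_anticomm 3 2,
    mul_neg, neg_neg, mul_zero, Prod.fst_add, Prod.snd_add, Prod.fst_sub, Prod.snd_sub,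
    TensorProduct.tmul_neg, TensorProduct.tmul_zero, TensorProduct.add_tmul,
    TensorProduct.sub_tmul]
  module

lemma hodge_fieldForm [StarRing B] (hodge : OmegaB B → OmegaB B)
    (hodge_add : ∀ x y : OmegaB B, hodge (x + y) = hodge x + hodge y)
    (h2_01 : ∀ b : B, hodge (b ⊗ₜ[ℂ] (dx 0 * dx 1)) = star b ⊗ₜ[ℂ] (-(dx 2 * dx 3)))
    (h2_02 : ∀ b : B, hodge (b ⊗ₜ[ℂ] (dx 0 * dx 2)) = star b ⊗ₜ[ℂ] (dx 1 * dx 3))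
    (h2_03 : ∀ b : B, hodge (b ⊗ₜ[ℂ] (dx 0 * dx 3)) = star b ⊗ₜ[ℂ] (-(dx 1 * dx 2)))
    (h2_12 : ∀ b : B, hodge (b ⊗ₜ[ℂ] (dx 1 * dx 2)) = star b ⊗ₜ[ℂ] (dx 0 * dx 3))
    (h2_13 : ∀ b : B, hodge (b ⊗ₜ[ℂ] (dx 1 * dx 3)) = star b ⊗ₜ[ℂ] (-(dx 0 * dx 2)))
    (h2_23 : ∀ b : B, hodge (b ⊗ₜ[ℂ] (dx 2 * dx 3)) = star b ⊗ₜ[ℂ] (dx 0 * dx 1))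
    (D H : B × B × B) :
    hodge (fieldForm D H) = fieldForm (-star H) (star D) := by
  let hodgeHom : OmegaB B →+ OmegaB B := AddMonoidHom.mk' hodge hodge_add
  change hodgeHom (fieldForm D H) = _
  simp only [fieldForm, map_add, map_sub, hodgeHom, AddMonoidHom.mk'_apply,
    h2_01, h2_02, h2_03, h2_12, h2_13, h2_23, Prod.fst_neg, Prod.snd_neg, Prod.fst_star,
    Prod.snd_star, TensorProduct.tmul_neg, TensorProduct.neg_tmul]
  abel

end Forms

section Triples

variable {B : Type*} [Ring B]

lemma cross_neg_left (X Y : B × B × B) : cross (-X) Y = -cross X Y := by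
  simp only [cross, Prod.fst_neg, Prod.snd_neg, neg_mul, Prod.neg_mk, neg_sub_neg, neg_sub]

lemma cross_neg_right (X Y : B × B × B) : cross X (-Y) = -cross X Y := by
  simp only [cross, Prod.fst_neg, Prod.snd_neg, mul_neg, Prod.neg_mk, neg_sub_neg, neg_sub]

lemma curl_neg {F : Type*} [FunLike F B B] [AddMonoidHomClass F B B] (d1 d2 d3 : F)
    (X : B × B × B) : curl d1 d2 d3 (-X) = -curl d1 d2 d3 X := by
  simp only [curl, Prod.fst_neg, Prod.snd_neg, map_neg, Prod.neg_mk, neg_sub_neg, neg_sub]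

variable [StarRing B]

lemma starV_eq_star (X : B × B × B) : starV X = star X := rfl

lemma star_commV (X Y : B × B × B) : star (commV X Y) = commV (star Y) (star X) := by
  simp only [commV, star_add, star_sub, star_mul, Prod.fst_star, Prod.snd_star]

lemma star_commR (X : B × B × B) (a : B) : star (commR X a) = commS (star a) (star X) := by
  simp only [commS, commR, Prod.star_def, star_sub, star_mul]

lemma star_cross (X Y : B × B × B) : star (cross X Y) = -cross (star Y) (star X) := by
  simp only [cross, Prod.star_def, star_sub, star_mul, Prod.neg_mk, neg_sub]

lemma dmap_star {d : B → B} (hd : ∀ b, d (star b) = star (d b)) (X : B × B × B) :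
    dmap d (star X) = star (dmap d X) := by
  simp only [dmap, Prod.star_def, hd]

lemma divg_star {d1 d2 d3 : B → B} (h1 : ∀ b, d1 (star b) = star (d1 b))
    (h2 : ∀ b, d2 (star b) = star (d2 b)) (h3 : ∀ b, d3 (star b) = star (d3 b))
    (X : B × B × B) : divg d1 d2 d3 (star X) = star (divg d1 d2 d3 X) := by
  simp only [divg, Prod.fst_star, Prod.snd_star, h1, h2, h3, star_add]

lemma curl_star {d1 d2 d3 : B → B} (h1 : ∀ b, d1 (star b) = star (d1 b))
    (h2 : ∀ b, d2 (star b) = star (d2 b)) (h3 : ∀ b, d3 (star b) = star (d3 b))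
    (X : B × B × B) : curl d1 d2 d3 (star X) = star (curl d1 d2 d3 X) := by
  simp only [curl, Prod.star_def, h1, h2, h3, star_sub]

end Triples

lemma star_I_smul {M : Type*} [AddCommGroup M] [Module ℂ M] [StarAddMonoid M] [StarModule ℂ M]
    (x : M) : star (Complex.I • x) = -(Complex.I • star x) := by
  rw [star_smul, Complex.star_def, Complex.conj_I, neg_smul]

section Conjugation

variable {B : Type*} [Ring B] [Algebra ℂ B] [StarRing B] [StarModule ℂ B]

lemma gauss_law_star_iff {d1 d2 d3 : B → B} (h1 : ∀ b, d1 (star b) = star (d1 b))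
    (h2 : ∀ b, d2 (star b) = star (d2 b)) (h3 : ∀ b, d3 (star b) = star (d3 b))
    (A D : B × B × B) :
    -divg d1 d2 d3 (star D) = Complex.I • commV A (star D) ↔
      divg d1 d2 d3 D = Complex.I • commV D (star A) := by
  have hrhs : Complex.I • commV A (star D) = -star (Complex.I • commV D (star A)) := by
    rw [star_I_smul, star_commV, star_star, neg_neg]
  rw [divg_star h1 h2 h3, hrhs, neg_inj, star_inj]

lemma ampere_law_star_iff {F : Type*} [FunLike F B B] [AddMonoidHomClass F B B]
    {d0 d1 d2 d3 : F} (h0 : ∀ b, d0 (star b) = star (d0 b))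
    (h1 : ∀ b, d1 (star b) = star (d1 b)) (h2 : ∀ b, d2 (star b) = star (d2 b))
    (h3 : ∀ b, d3 (star b) = star (d3 b)) (φ : B) (A D H : B × B × B) :
    -(curl d1 d2 d3 (-star H) + dmap d0 (star D)) =
        Complex.I • (cross A (-star H) + cross (-star H) A - commS φ (star D)) ↔
      curl d1 d2 d3 H - dmap d0 D =
        Complex.I • commR D (star φ) - Complex.I • (cross H (star A) + cross (star A) H) := by
  have hlhs : -(curl d1 d2 d3 (-star H) + dmap d0 (star D)) =
      star (curl d1 d2 d3 H - dmap d0 D) := by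
    rw [curl_neg, curl_star h1 h2 h3, dmap_star h0, star_sub, neg_add, neg_neg, sub_eq_add_neg]
  have hrhs : Complex.I • (cross A (-star H) + cross (-star H) A - commS φ (star D)) =
      star (Complex.I • commR D (star φ) - Complex.I • (cross H (star A) + cross (star A) H)) := by
    rw [star_sub, star_I_smul, star_I_smul, star_add, star_cross, star_cross, star_commR,
      star_star, star_star, cross_neg_left, cross_neg_right]
    module
  rw [hlhs, hrhs, star_inj]

end Conjugation

theorem nc_yang_mills_iff_gauss_ampere_general {B : Type*} [Ring B] [Algebra ℂ B]
    [StarRing B] [StarModule ℂ B]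
    (der : Fin 4 → (B →ₗ[ℂ] B))
    (hder_star : ∀ μ : Fin 4, ∀ b : B, der μ (star b) = star (der μ b))
    (hodge : OmegaB B → OmegaB B)
    (hodge_add : ∀ x y : OmegaB B, hodge (x + y) = hodge x + hodge y)
    (h2_01 : ∀ b : B, hodge (b ⊗ₜ[ℂ] (dx 0 * dx 1)) = star b ⊗ₜ[ℂ] (-(dx 2 * dx 3)))
    (h2_02 : ∀ b : B, hodge (b ⊗ₜ[ℂ] (dx 0 * dx 2)) = star b ⊗ₜ[ℂ] (dx 1 * dx 3))
    (h2_03 : ∀ b : B, hodge (b ⊗ₜ[ℂ] (dx 0 * dx 3)) = star b ⊗ₜ[ℂ] (-(dx 1 * dx 2)))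
    (h2_12 : ∀ b : B, hodge (b ⊗ₜ[ℂ] (dx 1 * dx 2)) = star b ⊗ₜ[ℂ] (dx 0 * dx 3))
    (h2_13 : ∀ b : B, hodge (b ⊗ₜ[ℂ] (dx 1 * dx 3)) = star b ⊗ₜ[ℂ] (-(dx 0 * dx 2)))
    (h2_23 : ∀ b : B, hodge (b ⊗ₜ[ℂ] (dx 2 * dx 3)) = star b ⊗ₜ[ℂ] (dx 0 * dx 1))
    (φ : B) (A : B × B × B) :
    (dOp der (hodge (Fflat der φ A)) =
        Complex.I • (Aflat φ A * hodge (Fflat der φ A) -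
          hodge (Fflat der φ A) * Aflat φ A)) ↔
    (divg ⇑(der 1) ⇑(der 2) ⇑(der 3)
        (Dfield ⇑(der 0) ⇑(der 1) ⇑(der 2) ⇑(der 3) φ A) =
      Complex.I • commV (Dfield ⇑(der 0) ⇑(der 1) ⇑(der 2) ⇑(der 3) φ A) (starV A) ∧
    curl ⇑(der 1) ⇑(der 2) ⇑(der 3) (Hfield ⇑(der 1) ⇑(der 2) ⇑(der 3) A) -
        dmap ⇑(der 0) (Dfield ⇑(der 0) ⇑(der 1) ⇑(der 2) ⇑(der 3) φ A) =
      Complex.I • commR (Dfield ⇑(der 0) ⇑(der 1) ⇑(der 2) ⇑(der 3) φ A) (star φ) -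
        Complex.I • (cross (Hfield ⇑(der 1) ⇑(der 2) ⇑(der 3) A) (starV A) +
          cross (starV A) (Hfield ⇑(der 1) ⇑(der 2) ⇑(der 3) A))) := by
  rw [Fflat_eq_fieldForm, hodge_fieldForm hodge hodge_add h2_01 h2_02 h2_03 h2_12 h2_13 h2_23,
    dOp_fieldForm, Aflat_mul_fieldForm_sub, smul_threeForm, threeForm_inj, starV_eq_star]
  exact and_congr
    (gauss_law_star_iff (hder_star 1) (hder_star 2) (hder_star 3) A _)
    (ampere_law_star_iff (hder_star 0) (hder_star 1) (hder_star 2) (hder_star 3) φ A _ _)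

/-- **Noncommutative Yang–Mills equation ⟺ noncommutative Gauss law and Ampère
equation**: with `★` the antilinear Hodge operator (`★(b⊗ω) = b*⊗★ω` on the
listed basis forms), the equation `d(★F♭) = i(A♭·(★F♭) - (★F♭)·A♭)` holds if
and only if `∇·D = i[D,A*]` and `∇×H - ∂₀D = i[D,φ*] - i(H×A* + A*×H)`. -/
theorem nc_yang_mills_iff_gauss_ampere {B : Type*} [Ring B] [Algebra ℂ B]
    [StarRing B] [StarModule ℂ B]
    (der : Fin 4 → (B →ₗ[ℂ] B))
    (hleib : ∀ μ : Fin 4, ∀ a b : B, der μ (a * b) = der μ a * b + a * der μ b)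
    (hcomm : ∀ μ ν : Fin 4, ∀ x : B, der μ (der ν x) = der ν (der μ x))
    (hder_star : ∀ μ : Fin 4, ∀ b : B, der μ (star b) = star (der μ b))
    (hodge : OmegaB B → OmegaB B)
    (hodge_add : ∀ x y : OmegaB B, hodge (x + y) = hodge x + hodge y)
    (hodge_conj : ∀ (c : ℂ) (x : OmegaB B),
      hodge (c • x) = (starRingEnd ℂ c) • hodge x)
    (h1_0 : ∀ b : B, hodge (b ⊗ₜ[ℂ] dx 0) = star b ⊗ₜ[ℂ] (dx 1 * dx 2 * dx 3))
    (h1_1 : ∀ b : B, hodge (b ⊗ₜ[ℂ] dx 1) = star b ⊗ₜ[ℂ] (dx 0 * dx 2 * dx 3))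
    (h1_2 : ∀ b : B, hodge (b ⊗ₜ[ℂ] dx 2) = star b ⊗ₜ[ℂ] (-(dx 0 * dx 1 * dx 3)))
    (h1_3 : ∀ b : B, hodge (b ⊗ₜ[ℂ] dx 3) = star b ⊗ₜ[ℂ] (dx 0 * dx 1 * dx 2))
    (h2_01 : ∀ b : B, hodge (b ⊗ₜ[ℂ] (dx 0 * dx 1)) = star b ⊗ₜ[ℂ] (-(dx 2 * dx 3)))
    (h2_02 : ∀ b : B, hodge (b ⊗ₜ[ℂ] (dx 0 * dx 2)) = star b ⊗ₜ[ℂ] (dx 1 * dx 3))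
    (h2_03 : ∀ b : B, hodge (b ⊗ₜ[ℂ] (dx 0 * dx 3)) = star b ⊗ₜ[ℂ] (-(dx 1 * dx 2)))
    (h2_12 : ∀ b : B, hodge (b ⊗ₜ[ℂ] (dx 1 * dx 2)) = star b ⊗ₜ[ℂ] (dx 0 * dx 3))
    (h2_13 : ∀ b : B, hodge (b ⊗ₜ[ℂ] (dx 1 * dx 3)) = star b ⊗ₜ[ℂ] (-(dx 0 * dx 2)))
    (h2_23 : ∀ b : B, hodge (b ⊗ₜ[ℂ] (dx 2 * dx 3)) = star b ⊗ₜ[ℂ] (dx 0 * dx 1))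
    (h3_123 : ∀ b : B, hodge (b ⊗ₜ[ℂ] (dx 1 * dx 2 * dx 3)) = star b ⊗ₜ[ℂ] dx 0)
    (h3_023 : ∀ b : B, hodge (b ⊗ₜ[ℂ] (dx 0 * dx 2 * dx 3)) = star b ⊗ₜ[ℂ] dx 1)
    (h3_013 : ∀ b : B, hodge (b ⊗ₜ[ℂ] (dx 0 * dx 1 * dx 3)) = star b ⊗ₜ[ℂ] (-dx 2))
    (h3_012 : ∀ b : B, hodge (b ⊗ₜ[ℂ] (dx 0 * dx 1 * dx 2)) = star b ⊗ₜ[ℂ] dx 3)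
    (φ : B) (A : B × B × B) :
    (dOp der (hodge (Fflat der φ A)) =
        Complex.I • (Aflat φ A * hodge (Fflat der φ A) -
          hodge (Fflat der φ A) * Aflat φ A)) ↔
    (divg ⇑(der 1) ⇑(der 2) ⇑(der 3)
        (Dfield ⇑(der 0) ⇑(der 1) ⇑(der 2) ⇑(der 3) φ A) =
      Complex.I • commV (Dfield ⇑(der 0) ⇑(der 1) ⇑(der 2) ⇑(der 3) φ A) (starV A) ∧
    curl ⇑(der 1) ⇑(der 2) ⇑(der 3) (Hfield ⇑(der 1) ⇑(der 2) ⇑(der 3) A) -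
        dmap ⇑(der 0) (Dfield ⇑(der 0) ⇑(der 1) ⇑(der 2) ⇑(der 3) φ A) =
      Complex.I • commR (Dfield ⇑(der 0) ⇑(der 1) ⇑(der 2) ⇑(der 3) φ A) (star φ) -
        Complex.I • (cross (Hfield ⇑(der 1) ⇑(der 2) ⇑(der 3) A) (starV A) +
          cross (starV A) (Hfield ⇑(der 1) ⇑(der 2) ⇑(der 3) A))) :=
  nc_yang_mills_iff_gauss_ampere_general der hder_star hodge hodge_add h2_01 h2_02 h2_03 h2_12 h2_13
    h2_23 φ A

end NC
end
end

section
/- (Explicit solution with magnetic charge.) Let θ ∈ ℝ, and let B be a unital associative ℂ-algebra containing elements x¹, x², x³ with x¹x² = x²x¹, x¹x³ = x³x¹ and x²x³ − x³x² = iθ·1, equipped with four pairwise commuting ℂ-linear derivations ∂₀,…,∂₃ such that ∂_μ(x^ν) = δ_{μν}·1 for μ,ν ∈ {1,2,3} and ∂₀(x^ν) = 0 for ν ∈ {1,2,3}. Take the gauge potential φ := 0, A := (0, −x³, −x¹x²). Then the corresponding noncommutative fields are D = (0,0,0) and H = (1 − (1−θ)x¹, x², 0), and the noncommutative Maxwell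 equations are satisfied with constant magnetic charge density and all other sources zero: ∇·H = θ·1 = i[Bf,A], ∇×D + ∂₀H = (0,0,0), ∇·D = 0, and ∇×H − ∂₀D = (0,0,0). -/
noncomputable section

/-!
With `φ = 0` and `A = (0, a, b)` the fields reduce to `D = -∂₀A` and
`H = (∂₂b - ∂₃a + i[a,b], -∂₁b, ∂₁a)`. For `a = -x³`, `b = -x¹x²` the only
noncommutative contribution is `i[x³, x¹x²] = -i x¹[x², x³] = θ x¹`, which turns the
classical `Bf = (1 - x¹, x², 0)` into `H = (1 - (1-θ)x¹, x², 0)`. Then `∇·H = θ`, and the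
commutation relation gives `i[Bf, A] = -i[x², x³] = θ` as well; all remaining equations follow
since `∂₀` kills `A`.
-/

namespace NC

section Derivation

variable {B : Type*} [Ring B] [Algebra ℂ B] {δ : B → B}

def IsDer.toLinearMap (h : IsDer δ) : B →ₗ[ℂ] B where
  toFun := δ
  map_add' := h.map_add
  map_smul' := h.map_smul

theorem IsDer.map_zero (h : IsDer δ) : δ 0 = 0 :=
  h.toLinearMap.map_zero

theorem IsDer.map_neg (h : IsDer δ) (a : B) : δ (-a) = -δ a :=
  h.toLinearMap.map_neg a

theorem IsDer.map_sub (h : IsDer δ) (a b : B) : δ (a - b) = δ a - δ b :=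
  h.toLinearMap.map_sub a b

theorem IsDer.map_one (h : IsDer δ) : δ 1 = 0 := by
  have h1 := h.leibniz 1 1
  simp only [mul_one, one_mul] at h1
  exact left_eq_add.mp h1

theorem IsDer.map_one_sub_smul (h : IsDer δ) (c : ℂ) (a : B) :
    δ (1 - c • a) = -(c • δ a) := by
  rw [h.map_sub, h.map_one, h.map_smul, zero_sub]

end Derivation

section Commutator

variable {B : Type*} [Ring B]

theorem commutator_mul_of_commute {x y z : B} (h : Commute x z) :
    z * (x * y) - x * y * z = -(x * (y * z - z * y)) := by
  rw [← mul_assoc, ← h.eq]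
  noncomm_ring

theorem commV_zero_fst (X : B × B × B) (a b : B) :
    commV X (0, a, b) = (X.2.1 * a - a * X.2.1) + (X.2.2 * b - b * X.2.2) := by
  simp [commV]

variable [Algebra ℂ B]

theorem I_smul_ofReal_smul_I_smul (θ : ℝ) (y : B) :
    Complex.I • ((θ : ℂ) • Complex.I • y) = -((θ : ℂ) • y) := by
  rw [smul_comm (θ : ℂ), smul_smul, Complex.I_mul_I, neg_one_smul]

theorem I_smul_commutator_mul_eq {θ : ℝ} {x1 x2 x3 : B} (h13 : Commute x1 x3)
    (h23 : x2 * x3 - x3 * x2 = (θ : ℂ) • (Complex.I • (1 : B))) :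
    Complex.I • (x3 * (x1 * x2) - x1 * x2 * x3) = (θ : ℂ) • x1 := by
  rw [commutator_mul_of_commute h13, h23, mul_smul_comm, mul_smul_comm, mul_one, smul_neg,
    I_smul_ofReal_smul_I_smul, neg_neg]

end Commutator

section Fields

variable {B : Type*} [Ring B] [Algebra ℂ B] {d0 d1 d2 d3 : B → B}

theorem dmap_zero (hd0 : IsDer d0) : dmap d0 (0 : B × B × B) = 0 := by
  simp [dmap, hd0.map_zero]

theorem divg_zero (hd1 : IsDer d1) (hd2 : IsDer d2) (hd3 : IsDer d3) :
    divg d1 d2 d3 (0 : B × B × B) = 0 := by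
  simp [divg, hd1.map_zero, hd2.map_zero, hd3.map_zero]

theorem curl_zero (hd1 : IsDer d1) (hd2 : IsDer d2) (hd3 : IsDer d3) :
    curl d1 d2 d3 (0 : B × B × B) = 0 := by
  simp [curl, hd1.map_zero, hd2.map_zero, hd3.map_zero]

theorem Dfield_zero_scalar (hd1 : IsDer d1) (hd2 : IsDer d2) (hd3 : IsDer d3)
    (A : B × B × B) : Dfield d0 d1 d2 d3 0 A = -dmap d0 A := by
  simp [Dfield, Efield, grad, commS, hd1.map_zero, hd2.map_zero, hd3.map_zero]

theorem Bfield_zero_fst (hd2 : IsDer d2) (hd3 : IsDer d3) (a b : B) :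
    Bfield d1 d2 d3 (0, a, b) = (d2 b - d3 a, -d1 b, d1 a) := by
  simp [Bfield, curl, hd2.map_zero, hd3.map_zero]

theorem Hfield_zero_fst (a b : B) :
    Hfield d1 d2 d3 (0, a, b) =
      Bfield d1 d2 d3 (0, a, b) + (Complex.I • (a * b - b * a), 0, 0) := by
  simp [Hfield, cross]

end Fields

theorem nc_magnetic_charge_solution_general {B : Type*} [Ring B] [Algebra ℂ B]
    (θ : ℝ) (x1 x2 x3 : B)
    (h13 : x1 * x3 = x3 * x1)
    (h23 : x2 * x3 - x3 * x2 = (θ : ℂ) • (Complex.I • (1 : B)))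
    (d0 d1 d2 d3 : B → B)
    (hd0 : IsDer d0) (hd1 : IsDer d1) (hd2 : IsDer d2) (hd3 : IsDer d3)
    (h01 : d0 x1 = 0) (h02 : d0 x2 = 0) (h03 : d0 x3 = 0)
    (h11 : d1 x1 = 1) (h12' : d1 x2 = 0) (h13' : d1 x3 = 0)
    (h21 : d2 x1 = 0) (h22 : d2 x2 = 1)
    (h31 : d3 x1 = 0) (h32 : d3 x2 = 0) (h33 : d3 x3 = 1) :
    Dfield d0 d1 d2 d3 (0 : B) (0, -x3, -(x1 * x2)) = 0 ∧
    Hfield d1 d2 d3 ((0 : B), -x3, -(x1 * x2)) =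
      (1 - ((1 : ℂ) - (θ : ℂ)) • x1, x2, 0) ∧
    divg d1 d2 d3 (Hfield d1 d2 d3 ((0 : B), -x3, -(x1 * x2))) = (θ : ℂ) • (1 : B) ∧
    divg d1 d2 d3 (Hfield d1 d2 d3 ((0 : B), -x3, -(x1 * x2))) =
      Complex.I • commV (Bfield d1 d2 d3 ((0 : B), -x3, -(x1 * x2)))
        ((0 : B), -x3, -(x1 * x2)) ∧
    curl d1 d2 d3 (Dfield d0 d1 d2 d3 (0 : B) (0, -x3, -(x1 * x2))) +
      dmap d0 (Hfield d1 d2 d3 ((0 : B), -x3, -(x1 * x2))) = 0 ∧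
    divg d1 d2 d3 (Dfield d0 d1 d2 d3 (0 : B) (0, -x3, -(x1 * x2))) = 0 ∧
    curl d1 d2 d3 (Hfield d1 d2 d3 ((0 : B), -x3, -(x1 * x2))) -
      dmap d0 (Dfield d0 d1 d2 d3 (0 : B) (0, -x3, -(x1 * x2))) = 0 := by
  have hD : Dfield d0 d1 d2 d3 (0 : B) (0, -x3, -(x1 * x2)) = 0 := by
    simp [Dfield_zero_scalar hd1 hd2 hd3, dmap, hd0.map_zero, hd0.map_neg, hd0.leibniz, h01, h02,
      h03]
  have hBf : Bfield d1 d2 d3 ((0 : B), -x3, -(x1 * x2)) = (1 - x1, x2, 0) := by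
    simp [Bfield_zero_fst hd2 hd3, hd1.map_neg, hd2.map_neg, hd3.map_neg, hd1.leibniz, hd2.leibniz,
      h11, h12', h13', h21, h22, h33, neg_add_eq_sub]
  have hH : Hfield d1 d2 d3 ((0 : B), -x3, -(x1 * x2)) =
      (1 - ((1 : ℂ) - (θ : ℂ)) • x1, x2, 0) := by
    rw [Hfield_zero_fst, hBf, neg_mul_neg, neg_mul_neg, I_smul_commutator_mul_eq h13 h23]
    ext <;> simp only [Prod.fst_add, Prod.snd_add, add_zero]
    module
  have hdivH :
      divg d1 d2 d3 (Hfield d1 d2 d3 ((0 : B), -x3, -(x1 * x2))) = (θ : ℂ) • (1 : B) := by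
    rw [hH, divg, hd1.map_one_sub_smul, h11, h22, hd3.map_zero]
    module
  refine ⟨hD, hH, hdivH, ?_, ?_, by rw [hD, divg_zero hd1 hd2 hd3], ?_⟩
  · have hcommV : commV (1 - x1, x2, 0) ((0 : B), -x3, -(x1 * x2)) = -(x2 * x3 - x3 * x2) := by
      rw [commV_zero_fst]
      noncomm_ring
    rw [hdivH, hBf, hcommV, h23, smul_neg, I_smul_ofReal_smul_I_smul, neg_neg]
  · rw [hD, hH, curl_zero hd1 hd2 hd3]
    simp [dmap, hd0.map_one_sub_smul, hd0.map_zero, h01, h02]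
  · rw [hD, hH, dmap_zero hd0]
    simp [curl, hd1.map_zero, hd2.map_zero, hd2.map_one_sub_smul, hd3.map_one_sub_smul, h12', h21,
      h31, h32]

/-- **Explicit solution with magnetic charge** on the Moyal–Weyl-type algebra with
`x²x³ - x³x² = iθ·1`: for the gauge potential `φ = 0`, `A = (0, -x³, -x¹x²)`
(i.e. `A^ω(ϑ) = x³dx² + x¹x²dx³`), the noncommutative fields are `D = 0` and
`H = (1 - (1-θ)x¹, x², 0)`, and the noncommutative Maxwell equations hold with
constant magnetic charge density `θ·1` and all other sources zero. -/
theorem nc_magnetic_charge_solution {B : Type*} [Ring B] [Algebra ℂ B]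
    (θ : ℝ) (x1 x2 x3 : B)
    (h12 : x1 * x2 = x2 * x1) (h13 : x1 * x3 = x3 * x1)
    (h23 : x2 * x3 - x3 * x2 = (θ : ℂ) • (Complex.I • (1 : B)))
    (d0 d1 d2 d3 : B → B)
    (hd0 : IsDer d0) (hd1 : IsDer d1) (hd2 : IsDer d2) (hd3 : IsDer d3)
    (hcomm : ∀ δ ∈ [d0, d1, d2, d3], ∀ δ' ∈ [d0, d1, d2, d3], ∀ x : B,
      δ (δ' x) = δ' (δ x))
    (h01 : d0 x1 = 0) (h02 : d0 x2 = 0) (h03 : d0 x3 = 0)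
    (h11 : d1 x1 = 1) (h12' : d1 x2 = 0) (h13' : d1 x3 = 0)
    (h21 : d2 x1 = 0) (h22 : d2 x2 = 1) (h23' : d2 x3 = 0)
    (h31 : d3 x1 = 0) (h32 : d3 x2 = 0) (h33 : d3 x3 = 1) :
    Dfield d0 d1 d2 d3 (0 : B) (0, -x3, -(x1 * x2)) = 0 ∧
    Hfield d1 d2 d3 ((0 : B), -x3, -(x1 * x2)) =
      (1 - ((1 : ℂ) - (θ : ℂ)) • x1, x2, 0) ∧
    divg d1 d2 d3 (Hfield d1 d2 d3 ((0 : B), -x3, -(x1 * x2))) = (θ : ℂ) • (1 : B) ∧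
    divg d1 d2 d3 (Hfield d1 d2 d3 ((0 : B), -x3, -(x1 * x2))) =
      Complex.I • commV (Bfield d1 d2 d3 ((0 : B), -x3, -(x1 * x2)))
        ((0 : B), -x3, -(x1 * x2)) ∧
    curl d1 d2 d3 (Dfield d0 d1 d2 d3 (0 : B) (0, -x3, -(x1 * x2))) +
      dmap d0 (Hfield d1 d2 d3 ((0 : B), -x3, -(x1 * x2))) = 0 ∧
    divg d1 d2 d3 (Dfield d0 d1 d2 d3 (0 : B) (0, -x3, -(x1 * x2))) = 0 ∧
    curl d1 d2 d3 (Hfield d1 d2 d3 ((0 : B), -x3, -(x1 * x2))) -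
      dmap d0 (Dfield d0 d1 d2 d3 (0 : B) (0, -x3, -(x1 * x2))) = 0 :=
  nc_magnetic_charge_solution_general θ x1 x2 x3 h13 h23 d0 d1 d2 d3 hd0 hd1 hd2 hd3 h01 h02 h03 h11
    h12' h13' h21 h22 h31 h32 h33

end NC
end
end
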